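/- Let u, v be smooth solutions of u_t = 2 u u_x - v, v_t = 2 u v_x. If at time t = 0 the constraint v_x = u_x² holds for all x, then v_x = u_x² holds for all times t; i.e., the submanifold {v_x = u_x²} is invariant under the flow. -/

import Mathlib

open Real

noncomputable def pdx (f : ℝ → ℝ → ℝ) (x t : ℝ) : ℝ := deriv (fun y => f y t) x

noncomputable def pdt (f : ℝ → ℝ → ℝ) (x t : ℝ) : ℝ := deriv (fun s => f x s) t

/-- The material derivative `D_t = ∂/∂t + u ∂/∂x` associated to the velocity `u`. -/
noncomputable def matDt (u f : ℝ → ℝ → ℝ) : ℝ → ℝ → ℝ :=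
  fun x t => pdt f x t + u x t * pdx f x t

section Helpers

open Set Function

lemma hasDerivAt_slice_x {E : Type*} [NormedAddCommGroup E] [NormedSpace ℝ E]
    {F : ℝ × ℝ → E} {x t : ℝ} (hF : DifferentiableAt ℝ F (x, t)) :
    HasDerivAt (fun y => F (y, t)) (fderiv ℝ F (x, t) (1, 0)) x :=
  hF.hasFDerivAt.comp_hasDerivAt x ((hasDerivAt_id x).prodMk (hasDerivAt_const x t))

lemma hasDerivAt_slice_t {E : Type*} [NormedAddCommGroup E] [NormedSpace ℝ E]
    {F : ℝ × ℝ → E} {x t : ℝ} (hF : DifferentiableAt ℝ F (x, t)) :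
    HasDerivAt (fun s => F (x, s)) (fderiv ℝ F (x, t) (0, 1)) t :=
  hF.hasFDerivAt.comp_hasDerivAt t ((hasDerivAt_const t x).prodMk (hasDerivAt_id t))

lemma pdx_eq {f : ℝ → ℝ → ℝ} {x t : ℝ} (hf : DifferentiableAt ℝ (uncurry f) (x, t)) :
    pdx f x t = fderiv ℝ (uncurry f) (x, t) (1, 0) :=
  (hasDerivAt_slice_x hf).deriv

lemma pdt_eq {f : ℝ → ℝ → ℝ} {x t : ℝ} (hf : DifferentiableAt ℝ (uncurry f) (x, t)) :
    pdt f x t = fderiv ℝ (uncurry f) (x, t) (0, 1) :=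
  (hasDerivAt_slice_t hf).deriv

lemma contDiff_uncurry_pdx {f : ℝ → ℝ → ℝ} (hf : ContDiff ℝ (⊤ : ℕ∞) (uncurry f)) :
    ContDiff ℝ (⊤ : ℕ∞) (uncurry (pdx f)) := by
  have h : uncurry (pdx f) = fun p : ℝ × ℝ => fderiv ℝ (uncurry f) p ((1 : ℝ), (0 : ℝ)) := by
    funext p
    exact pdx_eq (hf.differentiable (by simp) (p.1, p.2))
  rw [h]
  exact (ContinuousLinearMap.apply ℝ ℝ ((1 : ℝ), (0 : ℝ))).contDiff.comp
    (hf.fderiv_right (by simp))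

lemma hasDerivAt_pdx' {f : ℝ → ℝ → ℝ} (hf : ContDiff ℝ (⊤ : ℕ∞) (uncurry f)) (x t : ℝ) :
    HasDerivAt (fun y => f y t) (pdx f x t) x := by
  rw [pdx_eq (hf.differentiable (by simp) (x, t))]
  exact hasDerivAt_slice_x (hf.differentiable (by simp) (x, t))

lemma hasDerivAt_pdt' {f : ℝ → ℝ → ℝ} (hf : ContDiff ℝ (⊤ : ℕ∞) (uncurry f)) (x t : ℝ) :
    HasDerivAt (fun s => f x s) (pdt f x t) t := by
  rw [pdt_eq (hf.differentiable (by simp) (x, t))]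
  exact hasDerivAt_slice_t (hf.differentiable (by simp) (x, t))

lemma pdt_pdx_comm {f : ℝ → ℝ → ℝ} (hf : ContDiff ℝ (⊤ : ℕ∞) (uncurry f)) (x t : ℝ) :
    pdt (pdx f) x t = pdx (pdt f) x t := by
  set F := uncurry f with hF
  set F' := fderiv ℝ F with hF'
  have hF'd : ContDiff ℝ (⊤ : ℕ∞) F' := hf.fderiv_right (by simp)
  have h1 : ∀ p, HasFDerivAt F (F' p) p := fun p => (hf.differentiable (by simp) p).hasFDerivAt
  have h2 : HasFDerivAt F' (fderiv ℝ F' (x, t)) (x, t) :=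
    (hF'd.differentiable (by simp) (x, t)).hasFDerivAt
  have symm := second_derivative_symmetric h1 h2
  have e1 : pdt (pdx f) x t = (fderiv ℝ F' (x, t) (0, 1)) (1, 0) := by
    have hfun : (fun s => pdx f x s) = fun s => (F' (x, s)) ((1 : ℝ), (0 : ℝ)) := by
      funext s; exact pdx_eq (hf.differentiable (by simp) (x, s))
    have hd : HasDerivAt (fun s => F' (x, s)) (fderiv ℝ F' (x, t) (0, 1)) t :=
      hasDerivAt_slice_t (hF'd.differentiable (by simp) (x, t))
    have := ((ContinuousLinearMap.apply ℝ ℝ ((1 : ℝ), (0 : ℝ))).hasFDerivAt).comp_hasDerivAt t hd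
    simpa [pdt, hfun, Function.comp_def] using this.deriv
  have e2 : pdx (pdt f) x t = (fderiv ℝ F' (x, t) (1, 0)) (0, 1) := by
    have hfun : (fun y => pdt f y t) = fun y => (F' (y, t)) ((0 : ℝ), (1 : ℝ)) := by
      funext y; exact pdt_eq (hf.differentiable (by simp) (y, t))
    have hd : HasDerivAt (fun y => F' (y, t)) (fderiv ℝ F' (x, t) (1, 0)) x :=
      hasDerivAt_slice_x (hF'd.differentiable (by simp) (x, t))
    have := ((ContinuousLinearMap.apply ℝ ℝ ((0 : ℝ), (1 : ℝ))).hasFDerivAt).comp_hasDerivAt x hd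
    simpa [pdx, hfun, Function.comp_def] using this.deriv
  rw [e1, e2, symm ((0:ℝ),(1:ℝ)) ((1:ℝ),(0:ℝ))]

lemma periodic_pdx {f : ℝ → ℝ → ℝ} (hp : ∀ t, Function.Periodic (fun x => f x t) (2 * π)) :
    ∀ t, Function.Periodic (fun x => pdx f x t) (2 * π) := by
  intro t x
  show deriv (fun y => f y t) (x + 2 * π) = deriv (fun y => f y t) x
  rw [← deriv_comp_add_const (f := fun y => f y t) (a := 2 * π)]
  congr 1
  funext y
  exact hp t y

lemma bounded_of_periodic {h : ℝ → ℝ → ℝ} (hc : Continuous (uncurry h))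
    (hp : ∀ t, Function.Periodic (fun x => h x t) (2 * π)) (a b : ℝ) :
    ∃ C : ℝ, 0 ≤ C ∧ ∀ x : ℝ, ∀ t ∈ Set.Icc a b, |h x t| ≤ C := by
  have hK : IsCompact ((Icc (0:ℝ) (2*π)) ×ˢ (Icc a b)) := isCompact_Icc.prod isCompact_Icc
  obtain ⟨C, hC⟩ := hK.exists_bound_of_continuousOn hc.continuousOn
  refine ⟨max C 0, le_max_right _ _, fun x t ht => ?_⟩
  have hpi : (0:ℝ) < 2 * π := by positivity
  set n : ℤ := ⌊x / (2 * π)⌋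
  set y : ℝ := x - n * (2 * π) with hy
  have hy0 : 0 ≤ y := Int.sub_floor_div_mul_nonneg x hpi
  have hy1 : y < 2 * π := Int.sub_floor_div_mul_lt x hpi
  have hxy : h y t = h x t := (hp t).sub_int_mul_eq n
  have hmem : (y, t) ∈ (Icc (0:ℝ) (2*π)) ×ˢ (Icc a b) :=
    ⟨⟨hy0, hy1.le⟩, ht⟩
  have := hC (y, t) hmem
  rw [Real.norm_eq_abs] at this
  calc |h x t| = |h y t| := by rw [hxy]
    _ ≤ C := this
    _ ≤ max C 0 := le_max_left _ _

end Helpers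

open Set Function

theorem statement12
    (u v : ℝ → ℝ → ℝ)
    (hu : ContDiff ℝ (⊤ : ℕ∞) (Function.uncurry u))
    (hv : ContDiff ℝ (⊤ : ℕ∞) (Function.uncurry v))
    (hup : ∀ t, Function.Periodic (fun x => u x t) (2 * Real.pi))
    (hvp : ∀ t, Function.Periodic (fun x => v x t) (2 * Real.pi))
    (heq1 : ∀ x t, pdt u x t = 2 * u x t * pdx u x t - v x t)
    (heq2 : ∀ x t, pdt v x t = 2 * u x t * pdx v x t)
    (hinit : ∀ x, pdx v x 0 = (pdx u x 0) ^ 2) :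
    ∀ x t, pdx v x t = (pdx u x t) ^ 2 := by
  classical
  -- smoothness of the partial derivatives
  have hux : ContDiff ℝ (⊤ : ℕ∞) (uncurry (pdx u)) := contDiff_uncurry_pdx hu
  have hvx : ContDiff ℝ (⊤ : ℕ∞) (uncurry (pdx v)) := contDiff_uncurry_pdx hv
  set w : ℝ → ℝ → ℝ := fun x t => pdx v x t - (pdx u x t) ^ 2 with hw_def
  have hw : ContDiff ℝ (⊤ : ℕ∞) (uncurry w) := by
    have h : uncurry w = fun p : ℝ × ℝ => uncurry (pdx v) p - (uncurry (pdx u) p) ^ 2 := rfl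
    rw [h]
    exact hvx.sub (hux.pow 2)
  -- the PDE satisfied by w
  have hS1 : ∀ x t, pdt (pdx u) x t =
      2 * pdx u x t * pdx u x t + 2 * u x t * pdx (pdx u) x t - pdx v x t := by
    intro x t
    rw [pdt_pdx_comm hu]
    have hfun : (fun y => pdt u y t) = fun y => 2 * u y t * pdx u y t - v y t := by
      funext y; exact heq1 y t
    have hd : HasDerivAt (fun y => 2 * u y t * pdx u y t - v y t)
        (2 * pdx u x t * pdx u x t + 2 * u x t * pdx (pdx u) x t - pdx v x t) x := by
      have := (((hasDerivAt_pdx' hu x t).const_mul 2).fun_mul (hasDerivAt_pdx' hux x t)).fun_sub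
        (hasDerivAt_pdx' hv x t)
      convert this using 1
    show deriv (fun y => pdt u y t) x = _
    rw [hfun]
    exact hd.deriv
  have hS2 : ∀ x t, pdt (pdx v) x t =
      2 * pdx u x t * pdx v x t + 2 * u x t * pdx (pdx v) x t := by
    intro x t
    rw [pdt_pdx_comm hv]
    have hfun : (fun y => pdt v y t) = fun y => 2 * u y t * pdx v y t := by
      funext y; exact heq2 y t
    have hd : HasDerivAt (fun y => 2 * u y t * pdx v y t)
        (2 * pdx u x t * pdx v x t + 2 * u x t * pdx (pdx v) x t) x := by
      have := ((hasDerivAt_pdx' hu x t).const_mul 2).fun_mul (hasDerivAt_pdx' hvx x t)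
      convert this using 1
    show deriv (fun y => pdt v y t) x = _
    rw [hfun]
    exact hd.deriv
  have hS3 : ∀ x t, pdx w x t = pdx (pdx v) x t - 2 * pdx u x t * pdx (pdx u) x t := by
    intro x t
    have hd : HasDerivAt (fun y => pdx v y t - (pdx u y t) ^ 2)
        (pdx (pdx v) x t - 2 * pdx u x t * pdx (pdx u) x t) x := by
      have := (hasDerivAt_pdx' hvx x t).fun_sub ((hasDerivAt_pdx' hux x t).fun_pow 2)
      convert this using 1
      · rfl
      · rfl
      push_cast
      ring
    exact hd.deriv
  have hS4 : ∀ x t, pdt w x t = pdt (pdx v) x t - 2 * pdx u x t * pdt (pdx u) x t := by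
    intro x t
    have hd : HasDerivAt (fun s => pdx v x s - (pdx u x s) ^ 2)
        (pdt (pdx v) x t - 2 * pdx u x t * pdt (pdx u) x t) t := by
      have := (hasDerivAt_pdt' hvx x t).fun_sub ((hasDerivAt_pdt' hux x t).fun_pow 2)
      convert this using 1
      · rfl
      · rfl
      push_cast
      ring
    exact hd.deriv
  have hPDE : ∀ x t, pdt w x t = 2 * u x t * pdx w x t + 4 * pdx u x t * w x t := by
    intro x t
    rw [hS4, hS2, hS1, hS3]
    simp only [hw_def]
    ring
  -- now fix the point
  intro x₀ t₀
  set a : ℝ := min 0 t₀ with ha_def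
  set b : ℝ := max 0 t₀ with hb_def
  have hab : a ≤ b := le_trans (min_le_left _ _) (le_max_left _ _)
  have h0m : (0 : ℝ) ∈ Icc a b := ⟨min_le_left _ _, le_max_left _ _⟩
  have ht0m : t₀ ∈ Icc a b := ⟨min_le_right _ _, le_max_right _ _⟩
  obtain ⟨Cu, hCu0, hCu⟩ := bounded_of_periodic hu.continuous hup a b
  have huxp : ∀ t, Function.Periodic (fun x => pdx u x t) (2 * π) := periodic_pdx hup
  obtain ⟨Ku, hKu0, hKu⟩ := bounded_of_periodic hux.continuous huxp a b
  -- the characteristic curve through (x₀, t₀)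
  have hPL : IsPicardLindelof (fun t y => -2 * u y t) (tmin := a) (tmax := b) ⟨t₀, ht0m⟩ x₀
      (2 * Cu * (b - a)).toNNReal 0 (2 * Cu).toNNReal (2 * Ku).toNNReal := by
    refine ⟨?_, ?_, ?_, ?_⟩
    · intro t ht
      apply LipschitzWith.lipschitzOnWith
      apply lipschitzWith_of_nnnorm_deriv_le
        (fun y => ((hasDerivAt_pdx' hu y t).const_mul (-2)).differentiableAt)
      intro y
      have hder : deriv (fun y => -2 * u y t) y = -2 * pdx u y t :=
        ((hasDerivAt_pdx' hu y t).const_mul (-2)).deriv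
      rw [← NNReal.coe_le_coe, coe_nnnorm, Real.coe_toNNReal _ (by linarith),
        Real.norm_eq_abs, hder, abs_mul]
      have h1 : |(-2 : ℝ)| = 2 := by norm_num
      rw [h1]
      have := hKu y t ht
      linarith
    · intro x hx
      exact (continuous_const.mul
        (hu.continuous.comp (continuous_const.prodMk continuous_id))).continuousOn
    · intro t ht x hx
      rw [Real.coe_toNNReal _ (by linarith)]
      rw [Real.norm_eq_abs, abs_mul]
      have h1 : |(-2 : ℝ)| = 2 := by norm_num
      rw [h1]
      have := hCu x t ht
      linarith
    · have hmax : max (b - t₀) (t₀ - a) ≤ b - a :=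
        max_le (by linarith [ht0m.1]) (by linarith [ht0m.2])
      rw [Real.coe_toNNReal _ (by linarith), Real.coe_toNNReal _ (by nlinarith), NNReal.coe_zero,
        sub_zero]
      exact mul_le_mul_of_nonneg_left hmax (by linarith)
  obtain ⟨α, hα0, hαd⟩ := hPL.exists_eq_forall_mem_Icc_hasDerivWithinAt₀
  set W : ℝ → ℝ := fun t => w (α t) t with hW_def
  have hWd : ∀ t ∈ Icc a b, HasDerivWithinAt W (4 * pdx u (α t) t * W t) (Icc a b) t := by
    intro t ht
    have hcurve : HasDerivWithinAt (fun s => (α s, s)) (-2 * u (α t) t, 1) (Icc a b) t :=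
      (hαd t ht).prodMk (hasDerivWithinAt_id t _)
    have hfd : HasFDerivAt (uncurry w) (fderiv ℝ (uncurry w) (α t, t)) (α t, t) :=
      (hw.differentiable (by simp) _).hasFDerivAt
    have hcomp := hfd.comp_hasDerivWithinAt_of_eq t hcurve rfl
    have hval : fderiv ℝ (uncurry w) (α t, t) (-2 * u (α t) t, 1)
        = 4 * pdx u (α t) t * W t := by
      have hsplit : ((-2 * u (α t) t : ℝ), (1 : ℝ))
          = (-2 * u (α t) t) • ((1 : ℝ), (0 : ℝ)) + ((0 : ℝ), (1 : ℝ)) := by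
        simp [Prod.ext_iff]
      rw [hsplit, map_add, map_smul, ← pdx_eq (hw.differentiable (by simp) _),
        ← pdt_eq (hw.differentiable (by simp) _), smul_eq_mul, hPDE (α t) t]
      simp only [hW_def]
      ring
    exact hval ▸ hcomp
  have hWc : ContinuousOn W (Icc a b) := fun t ht => (hWd t ht).continuousWithinAt
  have hW0 : W 0 = 0 := by
    simp only [hW_def, hw_def]
    rw [hinit (α 0)]
    ring
  -- the linear comparison field
  set proj : ℝ → ℝ := fun t => max a (min t b) with hproj_def
  have hprojmem : ∀ t, proj t ∈ Icc a b := fun t =>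
    ⟨le_max_left _ _, max_le hab (min_le_right _ _)⟩
  have hprojeq : ∀ t ∈ Icc a b, proj t = t := by
    intro t ht
    simp only [hproj_def]
    rw [min_eq_left ht.2, max_eq_right ht.1]
  set c : ℝ → ℝ := fun t => 4 * pdx u (α (proj t)) (proj t) with hc_def
  have hcbound : ∀ t, |c t| ≤ 4 * Ku := by
    intro t
    simp only [hc_def]
    rw [abs_mul]
    have h4 : |(4 : ℝ)| = 4 := by norm_num
    rw [h4]
    have := hKu (α (proj t)) (proj t) (hprojmem t)
    linarith
  set vfield : ℝ → ℝ → ℝ := fun t y => c t * y with hvf_def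
  have hlip : ∀ t, LipschitzOnWith (4 * Ku).toNNReal (vfield t) univ := by
    intro t
    apply LipschitzWith.lipschitzOnWith
    have hdiff : Differentiable ℝ (fun y : ℝ => c t * y) :=
      fun y => ((hasDerivAt_id y).const_mul (c t)).differentiableAt
    apply lipschitzWith_of_nnnorm_deriv_le hdiff
    intro y
    have hder : deriv (fun y : ℝ => c t * y) y = c t * 1 :=
      ((hasDerivAt_id y).const_mul (c t)).deriv
    rw [← NNReal.coe_le_coe, coe_nnnorm, Real.coe_toNNReal _ (by linarith [hcbound t]),
      Real.norm_eq_abs, hder, mul_one]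
    exact hcbound t
  have hWvf : ∀ t ∈ Icc a b, vfield t (W t) = 4 * pdx u (α t) t * W t := by
    intro t ht
    simp only [hvf_def, hc_def, hprojeq t ht]
  have hgd : ∀ (t : ℝ), HasDerivAt (fun _ : ℝ => (0 : ℝ)) (vfield t 0) t := by
    intro t
    have h : vfield t 0 = 0 := mul_zero _
    rw [h]
    exact hasDerivAt_const t 0
  -- uniqueness of the trivial solution
  have hfinal : W t₀ = 0 := by
    rcases le_total 0 t₀ with h0 | h0
    · have ha : a = 0 := min_eq_left h0
      have hf' : ∀ t ∈ Ico a b, HasDerivWithinAt W (vfield t (W t)) (Ici t) t := by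
        intro t ht
        have hmem : Icc a b ∈ nhdsWithin t (Ici t) := by
          have h1 : Iic b ∈ nhdsWithin t (Ici t) :=
            mem_nhdsWithin_of_mem_nhds (Iic_mem_nhds ht.2)
          have h2 : Icc t b ∈ nhdsWithin t (Ici t) := by
            rw [← Ici_inter_Iic]
            exact Filter.inter_mem self_mem_nhdsWithin h1
          exact Filter.mem_of_superset h2 (Icc_subset_Icc ht.1 le_rfl)
        rw [hWvf t (Ico_subset_Icc_self ht)]
        exact (hWd t (Ico_subset_Icc_self ht)).mono_of_mem_nhdsWithin hmem
      have hg' : ∀ t ∈ Ico a b, HasDerivWithinAt (fun _ : ℝ => (0 : ℝ))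
          (vfield t ((fun _ : ℝ => (0 : ℝ)) t)) (Ici t) t :=
        fun t _ => (hgd t).hasDerivWithinAt
      have heqa : W a = (fun _ : ℝ => (0 : ℝ)) a := by rw [ha]; exact hW0
      have huniq := ODE_solution_unique_of_mem_Icc_right (s := fun _ => univ) (fun t _ => hlip t)
        hWc hf' (fun _ _ => mem_univ _) continuousOn_const hg' (fun _ _ => mem_univ _) heqa
      exact huniq ht0m
    · have hb : b = 0 := max_eq_left h0
      have hf' : ∀ t ∈ Ioc a b, HasDerivWithinAt W (vfield t (W t)) (Iic t) t := by
        intro t ht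
        have hmem : Icc a b ∈ nhdsWithin t (Iic t) := by
          have h1 : Ici a ∈ nhdsWithin t (Iic t) :=
            mem_nhdsWithin_of_mem_nhds (Ici_mem_nhds ht.1)
          have h2 : Icc a t ∈ nhdsWithin t (Iic t) := by
            rw [← Ici_inter_Iic]
            exact Filter.inter_mem h1 self_mem_nhdsWithin
          exact Filter.mem_of_superset h2 (Icc_subset_Icc le_rfl ht.2)
        rw [hWvf t (Ioc_subset_Icc_self ht)]
        exact (hWd t (Ioc_subset_Icc_self ht)).mono_of_mem_nhdsWithin hmem
      have hg' : ∀ t ∈ Ioc a b, HasDerivWithinAt (fun _ : ℝ => (0 : ℝ))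
          (vfield t ((fun _ : ℝ => (0 : ℝ)) t)) (Iic t) t :=
        fun t _ => (hgd t).hasDerivWithinAt
      have heqb : W b = (fun _ : ℝ => (0 : ℝ)) b := by rw [hb]; exact hW0
      have huniq := ODE_solution_unique_of_mem_Icc_left (s := fun _ => univ) (fun t _ => hlip t)
        hWc hf' (fun _ _ => mem_univ _) continuousOn_const hg' (fun _ _ => mem_univ _) heqb
      exact huniq ht0m
  have hzero : w x₀ t₀ = 0 := by rw [← hα0]; exact hfinal
  simp only [hw_def] at hzero
  linarith
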